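/- arXiv:1605.03811 — 6 statements merged into one kernel-verified Lean document; each statement's English description precedes it below -/
import Mathlib

section
/- Let f : ℝ → ℝ be concave on [a,b] and suppose x < x' are points where the left slope of f is defined and lslope(f,x) ≠ lslope(f,x'). Then the closed interval [x,x'] contains an extremal point of f, i.e., a point p ∈ [x,x'] such that (p, f(p)) is not a convex combination of two other points (y, f(y)), (z, f(z)) with y, z ∈ [a,b], y < p < z, lying on the graph of f. -/
open Set Filter Topology

/-- Equality case for concave functions: if `f p` lies on the chord from `y` to `z`,
then `f` agrees with that chord on all of `[y, z]`. -/
lemma affine_of_chord_eq {f : ℝ → ℝ} {a b y p z m : ℝ} (hf : ConcaveOn ℝ (Icc a b) f)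
    (hy : y ∈ Icc a b) (hz : z ∈ Icc a b) (hyp : y < p) (hpz : p < z)
    (h1 : f p - f y = m * (p - y)) (h2 : f z - f p = m * (z - p)) :
    ∀ t, y ≤ t → t ≤ z → f t = f p + m * (t - p) := by
  intro t ht1 ht2
  rcases lt_trichotomy t p with htp | rfl | hpt
  · rcases eq_or_lt_of_le ht1 with rfl | hyt
    · linarith
    · have htmem : t ∈ Icc a b := ⟨le_trans hy.1 ht1, le_trans ht2 hz.2⟩
      have hpmem : p ∈ Icc a b := ⟨le_trans hy.1 hyp.le, le_trans hpz.le hz.2⟩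
      have A := hf.slope_anti_adjacent htmem hz htp hpz
      have B := hf.slope_anti_adjacent hy hpmem hyt htp
      rw [div_le_div_iff₀ (by linarith) (by linarith)] at A
      rw [div_le_div_iff₀ (by linarith) (by linarith)] at B
      nlinarith [mul_pos (sub_pos.2 htp) (sub_pos.2 hyt), sub_pos.2 hpz, sub_pos.2 htp,
        sub_pos.2 hyt, sub_pos.2 hyp]
  · linarith
  · rcases eq_or_lt_of_le ht2 with rfl | htz
    · linarith
    · have htmem : t ∈ Icc a b := ⟨le_trans hy.1 ht1, le_trans ht2 hz.2⟩
      have hpmem : p ∈ Icc a b := ⟨le_trans hy.1 hyp.le, le_trans hpz.le hz.2⟩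
      have A := hf.slope_anti_adjacent hpmem hz hpt htz
      have B := hf.slope_anti_adjacent hy htmem hyp hpt
      rw [div_le_div_iff₀ (by linarith) (by linarith)] at A
      rw [div_le_div_iff₀ (by linarith) (by linarith)] at B
      nlinarith [sub_pos.2 hpz, sub_pos.2 hpt, sub_pos.2 htz, sub_pos.2 hyp]

/-- Extract slope equalities from a chord equality. -/
lemma chord_slopes {f : ℝ → ℝ} {y p z : ℝ} (hyp : y < p) (hpz : p < z)
    (heq : f p = ((z - p) * f y + (p - y) * f z) / (z - y)) :
    ∃ m : ℝ, f p - f y = m * (p - y) ∧ f z - f p = m * (z - p) := by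
  have hzy : z - y ≠ 0 := by linarith
  rw [eq_div_iff hzy] at heq
  refine ⟨(f z - f y) / (z - y), ?_, ?_⟩
  · rw [div_mul_eq_mul_div, eq_div_iff hzy]; ring_nf; ring_nf at heq; linarith
  · rw [div_mul_eq_mul_div, eq_div_iff hzy]; ring_nf; ring_nf at heq; linarith

/-- If `f` is concave on `[a,b]` and `x < x'` have distinct left slopes, then `[x,x']`
contains an extremal point of `f`, i.e. a point whose graph point is not a convex
combination of two other graph points. -/
theorem stmt_3 (f : ℝ → ℝ) (a b : ℝ) (hf : ConcaveOn ℝ (Icc a b) f)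
    (x x' : ℝ) (hx : x ∈ Icc a b) (hx' : x' ∈ Icc a b) (hlt : x < x')
    (Lx Lx' : ℝ)
    (hLx : Tendsto (fun t => (f x - f t) / (x - t)) (𝓝[Icc a b ∩ Iio x] x) (𝓝 Lx))
    (hLx' : Tendsto (fun t => (f x' - f t) / (x' - t)) (𝓝[Icc a b ∩ Iio x'] x') (𝓝 Lx'))
    (hne : Lx ≠ Lx') :
    ∃ p ∈ Icc x x',
      ¬ ∃ y z, y ∈ Icc a b ∧ z ∈ Icc a b ∧ y < p ∧ p < z ∧
        f p = ((z - p) * f y + (p - y) * f z) / (z - y) := by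
  -- trivial cases: x = a or x' = b are extremal for free
  rcases eq_or_lt_of_le hx.1 with hax | hax
  · refine ⟨x, ⟨le_refl x, hlt.le⟩, ?_⟩
    rintro ⟨y, z, hy, hz, hyp, hpz, -⟩
    exact absurd (hax ▸ hy.1) (not_le.2 hyp)
  rcases eq_or_lt_of_le hx'.2 with hx'b | hx'b
  · refine ⟨x', ⟨hlt.le, le_refl x'⟩, ?_⟩
    rintro ⟨y, z, hy, hz, hyp, hpz, -⟩
    exact absurd (hx'b ▸ hz.2) (not_le.2 hpz)
  by_contra hcon
  push_neg at hcon
  -- non-extremality at x gives the slope Lx on an interval to the right of x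
  obtain ⟨y0, z0, hy0, hz0, hy0x, hxz0, heq0⟩ := hcon x ⟨le_refl x, hlt.le⟩
  obtain ⟨m0, hm01, hm02⟩ := chord_slopes hy0x hxz0 heq0
  have key0 := affine_of_chord_eq hf hy0 hz0 hy0x hxz0 hm01 hm02
  -- Lx = m0
  have hy0a : a ≤ y0 := hy0.1
  have hsub0 : Ioo y0 x ⊆ Icc a b ∩ Iio x := fun t ht =>
    ⟨⟨le_of_lt (lt_of_le_of_lt hy0a ht.1), le_trans ht.2.le hx.2⟩, ht.2⟩
  have hnb0 : (𝓝[Icc a b ∩ Iio x] x).NeBot :=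
    (right_nhdsWithin_Ioo_neBot hy0x).mono (nhdsWithin_mono x hsub0)
  have hLxm0 : Lx = m0 := by
    refine tendsto_nhds_unique hLx (Tendsto.congr' ?_ tendsto_const_nhds)
    filter_upwards [eventually_mem_nhdsWithin,
      mem_nhdsWithin_of_mem_nhds (Ioi_mem_nhds hy0x)] with t ht hty0
    have h1 : f t = f x + m0 * (t - x) := key0 t hty0.le (le_trans ht.2.le hxz0.le)
    have h2 : x - t ≠ 0 := by have := ht.2; simp only [mem_Iio] at this; linarith
    rw [h1]; field_simp; ring
  subst hLxm0
  -- the set of points q with f affine of slope Lx on [x, q]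
  set S : Set ℝ := {q | q ∈ Icc x x' ∧ ∀ t ∈ Icc x q, f t = f x + Lx * (t - x)} with hS
  have hq0 : min z0 x' ∈ S := by
    constructor
    · exact ⟨le_min hxz0.le hlt.le, min_le_right _ _⟩
    · intro t ht
      have := key0 t (le_trans hy0x.le ht.1) (le_trans ht.2 (min_le_left _ _))
      linarith [this]
  have hxq0 : x < min z0 x' := lt_min hxz0 hlt
  have hbdd : BddAbove S := ⟨x', fun q hq => hq.1.2⟩
  have hSne : S.Nonempty := ⟨min z0 x', hq0⟩
  set p := sSup S with hp
  have hxp : x < p := lt_of_lt_of_le hxq0 (le_csSup hbdd hq0)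
  have hpx' : p ≤ x' := csSup_le hSne fun q hq => hq.1.2
  have F : ∀ t, x ≤ t → t < p → f t = f x + Lx * (t - x) := by
    intro t htx htp
    obtain ⟨q, hqS, htq⟩ := exists_lt_of_lt_csSup hSne htp
    exact hqS.2 t ⟨htx, htq.le⟩
  -- non-extremality at p
  obtain ⟨y, z, hy, hz, hyp, hpz, heqp⟩ := hcon p ⟨hxp.le, hpx'⟩
  obtain ⟨m, hm1, hm2⟩ := chord_slopes hyp hpz heqp
  have key := affine_of_chord_eq hf hy hz hyp hpz hm1 hm2
  set c := max x y with hc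
  have hcp : c < p := max_lt hxp hyp
  set t1 := (c + p) / 2 with ht1
  set t2 := (c + 3 * p) / 4 with ht2
  have hct1 : c < t1 := by rw [ht1]; linarith
  have ht12 : t1 < t2 := by rw [ht1, ht2]; linarith
  have ht2p : t2 < p := by rw [ht2]; linarith
  have hxc : x ≤ c := le_max_left _ _
  have hyc : y ≤ c := le_max_right _ _
  have hf1 : f t1 = f x + Lx * (t1 - x) := F t1 (le_trans hxc hct1.le) (lt_trans ht12 ht2p)
  have hf2 : f t2 = f x + Lx * (t2 - x) := F t2 (le_trans hxc (lt_trans hct1 ht12).le) ht2p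
  have hg1 : f t1 = f p + m * (t1 - p) :=
    key t1 (le_trans hyc hct1.le) (le_trans (lt_trans ht12 ht2p).le hpz.le)
  have hg2 : f t2 = f p + m * (t2 - p) :=
    key t2 (le_trans hyc (lt_trans hct1 ht12).le) (le_trans ht2p.le hpz.le)
  have hmLx : m = Lx := by
    have h12 : t2 - t1 ≠ 0 := by linarith
    have : m * (t2 - t1) = Lx * (t2 - t1) := by linarith
    exact mul_right_cancel₀ h12 this
  rw [hmLx] at key hg1 hg2
  have hfp : f p = f x + Lx * (p - x) := by linear_combination hf1 - hg1
  -- min z x' belongs to S, forcing p = x'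
  have hr : min z x' ∈ S := by
    constructor
    · exact ⟨le_min (lt_trans hxp hpz).le hlt.le, min_le_right _ _⟩
    · intro t ht
      rcases lt_or_ge t p with htp | hpt
      · exact F t ht.1 htp
      · have := key t (le_trans hyp.le hpt) (le_trans ht.2 (min_le_left _ _))
        linear_combination this + hfp
  have hrp : min z x' ≤ p := le_csSup hbdd hr
  have hpeq : p = x' := by
    rcases eq_or_lt_of_le hpx' with h | h
    · exact h
    · exact absurd hrp (not_le.2 (lt_min hpz h))
  -- conclude Lx' = Lx, contradiction
  have hsub1 : Ioo x x' ⊆ Icc a b ∩ Iio x' := fun t ht =>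
    ⟨⟨le_trans hx.1 ht.1.le, le_trans ht.2.le hx'.2⟩, ht.2⟩
  have hnb1 : (𝓝[Icc a b ∩ Iio x'] x').NeBot :=
    (right_nhdsWithin_Ioo_neBot hlt).mono (nhdsWithin_mono x' hsub1)
  have hfinal : Lx' = Lx := by
    refine tendsto_nhds_unique hLx' (Tendsto.congr' ?_ tendsto_const_nhds)
    filter_upwards [eventually_mem_nhdsWithin,
      mem_nhdsWithin_of_mem_nhds (Ioi_mem_nhds hlt)] with t ht htx
    have htx' : t < x' := ht.2
    have h1 : f t = f x + Lx * (t - x) := F t htx.le (hpeq ▸ htx')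
    have h2 : f x' = f x + Lx * (x' - x) := hpeq ▸ hfp
    have h3 : x' - t ≠ 0 := by linarith
    rw [h1, h2]; field_simp; ring
  exact hne hfinal.symm
end

section
/- Let f : ℝ → ℝ be concave on [a,b], and let x < x' be two points of (a,b] such that the open interval (x,x') contains an extremal point of f. Then lslope(f,x) ≠ lslope(f,x'). -/
open Set Filter Topology

/-- If `f` is concave on `[a,b]`, `x < x'` in `(a,b]`, and the open interval `(x,x')`
contains an extremal point of `f`, then the left slopes at `x` and `x'` differ. -/
theorem stmt_4 (f : ℝ → ℝ) (a b : ℝ) (hf : ConcaveOn ℝ (Icc a b) f)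
    (x x' : ℝ) (hx : x ∈ Ioc a b) (hx' : x' ∈ Ioc a b) (hlt : x < x')
    (p : ℝ) (hp : p ∈ Ioo x x')
    (hext : ∀ y z, a ≤ y → y < p → p < z → z ≤ b →
      ((z - p) * f y + (p - y) * f z) / (z - y) < f p)
    (Lx Lx' : ℝ)
    (hLx : Tendsto (fun t => (f x - f t) / (x - t)) (𝓝[Icc a b ∩ Iio x] x) (𝓝 Lx))
    (hLx' : Tendsto (fun t => (f x' - f t) / (x' - t)) (𝓝[Icc a b ∩ Iio x'] x') (𝓝 Lx')) :
    Lx ≠ Lx' := by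
  obtain ⟨hax, hxb⟩ := hx
  obtain ⟨hax', hx'b⟩ := hx'
  obtain ⟨hxp, hpx'⟩ := hp
  have hxmem : x ∈ Icc a b := ⟨hax.le, hxb⟩
  have hx'mem : x' ∈ Icc a b := ⟨hax'.le, hx'b⟩
  have hpmem : p ∈ Icc a b := ⟨(hax.trans hxp).le, (hpx'.trans_le hx'b).le⟩
  -- strict inequality from extremality at p with y = x, z = x'
  have key := hext x x' hax.le hxp hpx' hx'b
  have hA : (0:ℝ) < p - x := by linarith
  have hB : (0:ℝ) < x' - p := by linarith
  have hAB : (0:ℝ) < x' - x := by linarith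
  have hmid : (f x' - f p) / (x' - p) < (f p - f x) / (p - x) := by
    rw [div_lt_div_iff₀ hB hA]
    rw [div_lt_iff₀ hAB] at key
    nlinarith [key]
  have hne1 : (𝓝[Icc a b ∩ Iio x] x).NeBot := by
    have h : Icc a b ∩ Iio x = Ico a x := by
      ext t
      simp only [mem_inter_iff, mem_Icc, mem_Iio, mem_Ico]
      constructor
      · rintro ⟨⟨h1, _⟩, h3⟩; exact ⟨h1, h3⟩
      · rintro ⟨h1, h2⟩; exact ⟨⟨h1, by linarith⟩, h2⟩
    rw [h]
    exact right_nhdsWithin_Ico_neBot hax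
  have hne2 : (𝓝[Icc a b ∩ Iio x'] x').NeBot := by
    have h : Icc a b ∩ Iio x' = Ico a x' := by
      ext t
      simp only [mem_inter_iff, mem_Icc, mem_Iio, mem_Ico]
      constructor
      · rintro ⟨⟨h1, _⟩, h3⟩; exact ⟨h1, h3⟩
      · rintro ⟨h1, h2⟩; exact ⟨⟨h1, by linarith⟩, h2⟩
    rw [h]
    exact right_nhdsWithin_Ico_neBot hax'
  have h1 : (f p - f x) / (p - x) ≤ Lx := by
    refine ge_of_tendsto hLx ?_
    filter_upwards [self_mem_nhdsWithin] with t ht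
    obtain ⟨htmem, htlt⟩ := ht
    exact hf.slope_anti_adjacent htmem hpmem htlt hxp
  have h2 : Lx' ≤ (f x' - f p) / (x' - p) := by
    refine le_of_tendsto hLx' ?_
    filter_upwards [self_mem_nhdsWithin,
      eventually_nhdsWithin_of_eventually_nhds (eventually_gt_nhds hpx')] with t ht htgt
    obtain ⟨htmem, htlt⟩ := ht
    have htx' : t < x' := htlt
    have h0 := hf.slope_anti_adjacent hpmem hx'mem htgt htx'
    rw [div_le_div_iff₀ (by linarith : (0:ℝ) < x' - t) (by linarith : (0:ℝ) < t - p)] at h0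
    rw [div_le_div_iff₀ (by linarith : (0:ℝ) < x' - t) hB]
    nlinarith [h0]
  intro heq
  rw [heq] at h1
  linarith
end

section
/- Let f₁, f₂ be concave functions with f₁(x) = f₂(x) at an interior point x where all one-sided slopes exist, and let f₀ = min(f₁, f₂) pointwise. Then lslope(f₀,x) = max(lslope(f₁,x), lslope(f₂,x)) and rslope(f₀,x) = min(rslope(f₁,x), rslope(f₂,x)). -/
open Set Filter Topology

/-- If `f₁ x = f₂ x` at an interior point with all one-sided slopes defined, then for
`f₀ = min(f₁,f₂)` pointwise, `lslope(f₀,x) = max(lslope(f₁,x), lslope(f₂,x))` and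
`rslope(f₀,x) = min(rslope(f₁,x), rslope(f₂,x))`. -/
theorem stmt_14 (f₁ f₂ : ℝ → ℝ) (a b x : ℝ) (hx : x ∈ Ioo a b)
    (h1 : ConcaveOn ℝ (Ioo a b) f₁) (h2 : ConcaveOn ℝ (Ioo a b) f₂)
    (heq : f₁ x = f₂ x)
    (L₁ L₂ R₁ R₂ : ℝ)
    (hL₁ : Tendsto (fun t => (f₁ x - f₁ t) / (x - t)) (𝓝[<] x) (𝓝 L₁))
    (hL₂ : Tendsto (fun t => (f₂ x - f₂ t) / (x - t)) (𝓝[<] x) (𝓝 L₂))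
    (hR₁ : Tendsto (fun t => (f₁ x - f₁ t) / (x - t)) (𝓝[>] x) (𝓝 R₁))
    (hR₂ : Tendsto (fun t => (f₂ x - f₂ t) / (x - t)) (𝓝[>] x) (𝓝 R₂)) :
    Tendsto (fun t => (min (f₁ x) (f₂ x) - min (f₁ t) (f₂ t)) / (x - t)) (𝓝[<] x)
      (𝓝 (max L₁ L₂)) ∧
    Tendsto (fun t => (min (f₁ x) (f₂ x) - min (f₁ t) (f₂ t)) / (x - t)) (𝓝[>] x)
      (𝓝 (min R₁ R₂)) := by
  have key : ∀ t, min (f₁ x) (f₂ x) - min (f₁ t) (f₂ t)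
      = max (f₁ x - f₁ t) (f₂ x - f₂ t) := by
    intro t
    rw [heq, min_self]
    rcases le_total (f₁ t) (f₂ t) with h | h
    · rw [min_eq_left h, max_eq_left (by linarith)]
    · rw [min_eq_right h, max_eq_right (by linarith)]
  constructor
  · refine (hL₁.max hL₂).congr' ?_
    filter_upwards [self_mem_nhdsWithin] with t ht
    have hpos : 0 < x - t := sub_pos.2 ht
    rw [key t, max_div_div_right hpos.le]
  · refine (hR₁.min hR₂).congr' ?_
    filter_upwards [self_mem_nhdsWithin] with t ht
    have hneg : x - t < 0 := sub_neg.2 ht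
    rw [key t]
    rcases le_total (f₁ x - f₁ t) (f₂ x - f₂ t) with h | h
    · rw [max_eq_right h, min_eq_right (div_le_div_of_nonpos_of_le hneg.le h)]
    · rw [max_eq_left h, min_eq_left (div_le_div_of_nonpos_of_le hneg.le h)]
end

section
/- Let f₀, f₁, f₂, λ₁, λ₂ be as in the Minkowski-combination setting (hypograph of f₀ = λ₁·hypograph(f₁) + λ₂·hypograph(f₂), f_i concave, λ₁+λ₂=1, λ_i>0). Suppose (p, f₀(p)) = λ₁·(q, f₁(q)) + λ₂·(r, f₂(r)) with all points on the respective graphs. Then for every p' < p in the domain of f₀ there exist q' ≤ q and r' ≤ r in the domains of f₁, f₂ with (p', f₀(p')) = λ₁·(q', f₁(q')) + λ₂·(r', f₂(r')). -/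
/-!
Write `p' = λ₁ a + λ₂ b` with `f₀ p' = λ₁ f₁ a + λ₂ f₂ b`; the hypograph identity says that `f₀`
dominates every such combination and is attained by one. If `a ≤ q` and `b ≤ r` we are done.
Otherwise, say `b > r`: then `a < q`, and moving `a` up and `q` down by `d = λ₂ (b - r) / λ₁` turns
the two decompositions `(a, b)` of `p'` and `(q, r)` of `p` into `(a + d, r)` and `(q - d, b)`.
By concavity `f₁ a + f₁ q ≤ f₁ (a + d) + f₁ (q - d)`, so the new combinations are at least as large
as the old ones, hence exact.
-/

open Set Filter Topology Pointwise

/-- Hypograph of a function on a domain. -/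
def hypo (f : ℝ → ℝ) (s : Set ℝ) : Set (ℝ × ℝ) := {p | p.1 ∈ s ∧ p.2 ≤ f p.1}

theorem ConcaveOn.add_le_map_add_add_map_sub {𝕜 : Type*} [Field 𝕜] [LinearOrder 𝕜]
    [IsStrictOrderedRing 𝕜] {s : Set 𝕜} {f : 𝕜 → 𝕜} (hf : ConcaveOn 𝕜 s f) {x y d : 𝕜}
    (hx : x ∈ s) (hy : y ∈ s) (hd : 0 ≤ d) (hdxy : x + d ≤ y) :
    f x + f y ≤ f (x + d) + f (y - d) := by
  rcases (le_of_add_le_of_nonneg_left hdxy hd).eq_or_lt with rfl | hxy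
  · obtain rfl : d = 0 := by linarith
    simp
  set t := d / (y - x)
  have ht : t * (y - x) = d := div_mul_cancel₀ d (sub_pos.mpr hxy).ne'
  have ht0 : 0 ≤ t := div_nonneg hd (sub_pos.mpr hxy).le
  have ht1 : 0 ≤ 1 - t := by
    rw [sub_nonneg, div_le_one (sub_pos.mpr hxy)]
    linarith
  have hleft := hf.2 hx hy ht1 ht0 (by ring)
  have hright := hf.2 hx hy ht0 ht1 (by ring)
  rw [show (1 - t) • x + t • y = x + d by simp only [smul_eq_mul]; linear_combination ht]
    at hleft
  rw [show t • x + (1 - t) • y = y - d by simp only [smul_eq_mul]; linear_combination -ht]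
    at hright
  simp only [smul_eq_mul] at hleft hright
  linarith

section Decomposition

variable {f₀ f₁ f₂ : ℝ → ℝ} {s₀ s₁ s₂ : Set ℝ} {lam₁ lam₂ : ℝ}

theorem smul_graph_add_smul_graph (x y : ℝ) :
    lam₁ • ((x, f₁ x) : ℝ × ℝ) + lam₂ • ((y, f₂ y) : ℝ × ℝ) =
      (lam₁ * x + lam₂ * y, lam₁ * f₁ x + lam₂ * f₂ y) := by
  simp

theorem mul_add_mul_le_of_hypo_eq (hhyp : hypo f₀ s₀ = lam₁ • hypo f₁ s₁ + lam₂ • hypo f₂ s₂)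
    {x y : ℝ} (hx : x ∈ s₁) (hy : y ∈ s₂) :
    lam₁ * f₁ x + lam₂ * f₂ y ≤ f₀ (lam₁ * x + lam₂ * y) := by
  have hmem : lam₁ • ((x, f₁ x) : ℝ × ℝ) + lam₂ • ((y, f₂ y) : ℝ × ℝ) ∈ hypo f₀ s₀ := by
    rw [hhyp]
    exact add_mem_add (smul_mem_smul_set ⟨hx, le_rfl⟩) (smul_mem_smul_set ⟨hy, le_rfl⟩)
  rw [smul_graph_add_smul_graph] at hmem
  exact hmem.2

theorem exists_eq_mul_add_mul_of_hypo_eq (hl1 : 0 ≤ lam₁) (hl2 : 0 ≤ lam₂)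
    (hhyp : hypo f₀ s₀ = lam₁ • hypo f₁ s₁ + lam₂ • hypo f₂ s₂) {z : ℝ} (hz : z ∈ s₀) :
    ∃ a ∈ s₁, ∃ b ∈ s₂, z = lam₁ * a + lam₂ * b ∧ f₀ z = lam₁ * f₁ a + lam₂ * f₂ b := by
  have hmem : ((z, f₀ z) : ℝ × ℝ) ∈ hypo f₀ s₀ := ⟨hz, le_rfl⟩
  rw [hhyp] at hmem
  obtain ⟨_, ⟨⟨a, u⟩, ⟨ha, hu⟩, rfl⟩, _, ⟨⟨b, v⟩, ⟨hb, hv⟩, rfl⟩, hzab⟩ := hmem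
  simp only [Prod.smul_mk, Prod.mk_add_mk, Prod.ext_iff, smul_eq_mul] at hzab
  obtain ⟨rfl, hfz⟩ := hzab
  refine ⟨a, ha, b, hb, rfl, le_antisymm ?_ (mul_add_mul_le_of_hypo_eq hhyp ha hb)⟩
  rw [← hfz]
  gcongr

theorem exists_decomp_left_le_of_right_le (h1 : ConcaveOn ℝ s₁ f₁) (hl1 : 0 < lam₁) (hl2 : 0 ≤ lam₂)
    (hle : ∀ x ∈ s₁, ∀ y ∈ s₂, lam₁ * f₁ x + lam₂ * f₂ y ≤ f₀ (lam₁ * x + lam₂ * y))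
    {p p' q r a b : ℝ} (hq : q ∈ s₁) (ha : a ∈ s₁) (hr : r ∈ s₂) (hb : b ∈ s₂)
    (hp : p = lam₁ * q + lam₂ * r) (hfp : f₀ p = lam₁ * f₁ q + lam₂ * f₂ r)
    (hp' : p' = lam₁ * a + lam₂ * b) (hfp' : f₀ p' = lam₁ * f₁ a + lam₂ * f₂ b)
    (hpp' : p' ≤ p) (hrb : r ≤ b) :
    ∃ q' ∈ s₁, q' ≤ q ∧ p' = lam₁ * q' + lam₂ * r ∧ f₀ p' = lam₁ * f₁ q' + lam₂ * f₂ r := by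
  set d := lam₂ * (b - r) / lam₁
  have hd : lam₁ * d = lam₂ * (b - r) := mul_div_cancel₀ _ hl1.ne'
  have hd0 : 0 ≤ d := div_nonneg (mul_nonneg hl2 (sub_nonneg.mpr hrb)) hl1.le
  have hadq : a + d ≤ q := le_of_mul_le_mul_left (by linear_combination hpp' - hp' + hp + hd) hl1
  have hmem : Icc a q ⊆ s₁ := h1.1.ordConnected.out ha hq
  have had : a + d ∈ s₁ := hmem ⟨by linarith, hadq⟩
  have hqd : q - d ∈ s₁ := hmem ⟨by linarith, by linarith⟩
  have hexch := h1.add_le_map_add_add_map_sub ha hq hd0 hadq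
  have hp'_eq : p' = lam₁ * (a + d) + lam₂ * r := by linear_combination hp' - hd
  have hp_eq : p = lam₁ * (q - d) + lam₂ * b := by linear_combination hp + hd
  have hle_p' : lam₁ * f₁ (a + d) + lam₂ * f₂ r ≤ f₀ p' := by
    rw [hp'_eq]; exact hle _ had _ hr
  have hle_p : lam₁ * f₁ (q - d) + lam₂ * f₂ b ≤ f₀ p := by
    rw [hp_eq]; exact hle _ hqd _ hb
  refine ⟨a + d, had, hadq, hp'_eq, le_antisymm ?_ hle_p'⟩
  linarith [mul_le_mul_of_nonneg_left hexch hl1.le]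

end Decomposition

theorem stmt_16_general (f₀ f₁ f₂ : ℝ → ℝ) (s₀ s₁ s₂ : Set ℝ)
    (h1 : ConcaveOn ℝ s₁ f₁) (h2 : ConcaveOn ℝ s₂ f₂)
    (lam₁ lam₂ : ℝ) (hl1 : 0 < lam₁) (hl2 : 0 < lam₂)
    (hhyp : hypo f₀ s₀ = lam₁ • hypo f₁ s₁ + lam₂ • hypo f₂ s₂)
    (p q r : ℝ) (hq : q ∈ s₁) (hr : r ∈ s₂)
    (hdec : ((p, f₀ p) : ℝ × ℝ) = lam₁ • ((q, f₁ q) : ℝ × ℝ) + lam₂ • ((r, f₂ r) : ℝ × ℝ)) :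
    ∀ p' ∈ s₀, p' < p → ∃ q' ∈ s₁, ∃ r' ∈ s₂, q' ≤ q ∧ r' ≤ r ∧
      p' = lam₁ * q' + lam₂ * r' ∧ f₀ p' = lam₁ * f₁ q' + lam₂ * f₂ r' := by
  intro p' hp' hpp'
  rw [smul_graph_add_smul_graph, Prod.ext_iff] at hdec
  obtain ⟨hp, hfp⟩ := hdec
  have hswap : hypo f₀ s₀ = lam₂ • hypo f₂ s₂ + lam₁ • hypo f₁ s₁ := hhyp.trans (add_comm _ _)
  obtain ⟨a, ha, b, hb, hp'ab, hfp'ab⟩ := exists_eq_mul_add_mul_of_hypo_eq hl1.le hl2.le hhyp hp'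
  rcases lt_or_ge r b with hrb | hbr
  · obtain ⟨q', hq', hq'q, hp'q', hfp'q'⟩ := exists_decomp_left_le_of_right_le h1 hl1 hl2.le
      (fun x hx y hy ↦ mul_add_mul_le_of_hypo_eq hhyp hx hy) hq ha hr hb hp hfp hp'ab hfp'ab
      hpp'.le hrb.le
    exact ⟨q', hq', r, hr, hq'q, le_rfl, hp'q', hfp'q'⟩
  rcases lt_or_ge q a with hqa | haq
  · obtain ⟨r', hr', hr'r, hp'r', hfp'r'⟩ := exists_decomp_left_le_of_right_le h2 hl2 hl1.le
      (fun y hy x hx ↦ mul_add_mul_le_of_hypo_eq hswap hy hx) hr hb hq ha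
      (by linarith) (by linarith) (by linarith) (by linarith) hpp'.le hqa.le
    exact ⟨q, hq, r', hr', le_rfl, hr'r, by linarith, by linarith⟩
  · exact ⟨a, ha, b, hb, haq, hbr, hp'ab, hfp'ab⟩

/-- In the Minkowski-combination setting, every point `(p', f₀ p')` with `p' < p`
decomposes into points `(q', f₁ q')` and `(r', f₂ r')` with `q' ≤ q` and `r' ≤ r`. -/
theorem stmt_16 (f₀ f₁ f₂ : ℝ → ℝ) (s₀ s₁ s₂ : Set ℝ)
    (hs₀ : s₀.OrdConnected) (hs₁ : s₁.OrdConnected) (hs₂ : s₂.OrdConnected)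
    (h0 : ConcaveOn ℝ s₀ f₀) (h1 : ConcaveOn ℝ s₁ f₁) (h2 : ConcaveOn ℝ s₂ f₂)
    (lam₁ lam₂ : ℝ) (hl1 : 0 < lam₁) (hl2 : 0 < lam₂) (hsum : lam₁ + lam₂ = 1)
    (hhyp : hypo f₀ s₀ = lam₁ • hypo f₁ s₁ + lam₂ • hypo f₂ s₂)
    (p q r : ℝ) (hp : p ∈ s₀) (hq : q ∈ s₁) (hr : r ∈ s₂)
    (hdec : ((p, f₀ p) : ℝ × ℝ) = lam₁ • ((q, f₁ q) : ℝ × ℝ) + lam₂ • ((r, f₂ r) : ℝ × ℝ)) :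
    ∀ p' ∈ s₀, p' < p → ∃ q' ∈ s₁, ∃ r' ∈ s₂, q' ≤ q ∧ r' ≤ r ∧
      p' = lam₁ * q' + lam₂ * r' ∧ f₀ p' = lam₁ * f₁ q' + lam₂ * f₂ r' :=
  stmt_16_general f₀ f₁ f₂ s₀ s₁ s₂ h1 h2 lam₁ lam₂ hl1 hl2 hhyp p q r hq hr hdec
end

section
/- Consider a finite directed graph G = (V, E) in which every vertex has exactly two outgoing edges, with a weight function w : E → ℝ satisfying w(e) ≥ W > 0 for all e and, for every vertex v, the weights of the two outgoing edges of v sum to 1 (so W ≤ 1/2 < 1). Suppose from every vertex Eve has a (memoryless) strategy σ : V → V (choosing one successor of each vertex) such that every path following σ reaches a target set T within |V| steps. Define a(v) as the length of the longest σ-path from v not hitting T (so a(v) ≤ |V| and a(σ(v)) ≤ a(v) - 1 for v ∉ T), and the potential p(v,c) = c + W^{a(v)} - W^{|V|}. Then for every vertex v ∉ T with successors v₁, v₂ where a(v₁) ≤ a(v) - 1, and for every pair c₁, c₂ ∈ ℝ with c = w(v,v₁)·c₁ + w(v,v₂)·c₂, it holds that max(p(v₁,c₁), p(v₂,c₂))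 ≥ p(v,c) + W^{|V|} - W^{|V|+1}. -/
/-- Potential inequality for the inverse betting game: if `c = w₁c₁ + w₂c₂` with
`w₁, w₂ ≥ W`, `w₁ + w₂ = 1`, `a₁ + 1 ≤ a ≤ N`, `a₂ ≤ N` and `0 < W ≤ 1/2`, then one of
the successor potentials exceeds the current one by at least `W^N - W^(N+1)`. -/
theorem stmt_17 (W c c₁ c₂ w₁ w₂ : ℝ) (N a a₁ a₂ : ℕ)
    (hW0 : 0 < W) (hW : W ≤ 1 / 2)
    (hw₁ : W ≤ w₁) (hw₂ : W ≤ w₂) (hsum : w₁ + w₂ = 1)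
    (hc : c = w₁ * c₁ + w₂ * c₂)
    (ha₁ : a₁ + 1 ≤ a) (ha : a ≤ N) (ha₂ : a₂ ≤ N) :
    (c + W ^ a - W ^ N) + (W ^ N - W ^ (N + 1)) ≤
      max (c₁ + W ^ a₁ - W ^ N) (c₂ + W ^ a₂ - W ^ N) := by
  have hW1 : W ≤ 1 := by linarith
  have h1 : W ^ a ≤ W ^ (a₁ + 1) := pow_le_pow_of_le_one hW0.le hW1 ha₁
  have h2 : W ^ N ≤ W ^ a₁ := pow_le_pow_of_le_one hW0.le hW1 (by omega)
  have h3 : W ^ N ≤ W ^ a₂ := pow_le_pow_of_le_one hW0.le hW1 ha₂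
  have hps : W ^ (a₁ + 1) = W * W ^ a₁ := pow_succ' W a₁
  have hpN : W ^ (N + 1) = W * W ^ N := pow_succ' W N
  have hw₁0 : 0 ≤ w₁ := le_trans hW0.le hw₁
  have hw₂0 : 0 ≤ w₂ := le_trans hW0.le hw₂
  set M := max (c₁ + W ^ a₁ - W ^ N) (c₂ + W ^ a₂ - W ^ N) with hM
  have hmax1 : c₁ + W ^ a₁ - W ^ N ≤ M := le_max_left _ _
  have hmax2 : c₂ + W ^ a₂ - W ^ N ≤ M := le_max_right _ _
  have hq : w₁ * W ^ a₁ + w₂ * W ^ a₁ = W ^ a₁ := by rw [← add_mul, hsum, one_mul]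
  have hqM : w₁ * M + w₂ * M = M := by rw [← add_mul, hsum, one_mul]
  nlinarith [hq, hqM, mul_le_mul_of_nonneg_left hmax1 hw₁0,
    mul_le_mul_of_nonneg_left hmax2 hw₂0,
    mul_le_mul_of_nonneg_left h3 hw₂0,
    mul_le_mul_of_nonneg_right h2 (by linarith : (0:ℝ) ≤ 1 - W - w₂)]
end

section
/- In an inverse betting game ⟨V_∃, V_∀, E, (v₀,c₀), w⟩ with all weights bounded below by W > 0 and every vertex having two successors whose outgoing weights sum to 1: if from every vertex Eve has a strategy ensuring a visit to a target set T, then for every bound B ∈ ℝ, Eve has a strategy ensuring that the play reaches a configuration in (T × [c₀, +∞)) ∪ (V × [B, +∞)), where in Eve's vertices Adam distributes the current credit c over the two successors as d₁, d₂ with w₁·d₁ + w₂·d₂ = c and Eve picks the successor, and in Adam's vertices Adam moves keeping the credit unchanged. -/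
open Set

/-- An inverse betting game: each vertex belongs to Eve or Adam, has exactly two
successors (indexed by `Bool`), and the weights of the two outgoing edges of each
vertex are bounded below by `W > 0` and sum to `1`. -/
structure IBG (V : Type) where
  isEve : V → Bool
  succ : V → Bool → V
  w : V → Bool → ℝ
  W : ℝ
  hWpos : 0 < W
  hWle : ∀ v i, W ≤ w v i
  hsum : ∀ v, w v true + w v false = 1

namespace IBG

variable {V : Type} (G : IBG V)

/-- A play of the underlying reachability game from `v`, consistent with Eve's
(history-dependent) graph strategy `σ`: Eve picks the successor at her vertices,
Adam picks arbitrarily at his. -/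
def GraphPlay (σ : List V → Bool) (v : V) (ρ : ℕ → V) : Prop :=
  ρ 0 = v ∧ ∀ n,
    (G.isEve (ρ n) = true →
      ρ (n + 1) = G.succ (ρ n) (σ (List.ofFn fun i : Fin (n + 1) => ρ i))) ∧
    (G.isEve (ρ n) = false → ∃ i, ρ (n + 1) = G.succ (ρ n) i)

/-- A play of the inverse betting game from configuration `(v₀, c₀)`, consistent with
Eve's strategy `σ`. At Eve's vertices Adam distributes the current credit `c` over the
two successors as `d` with `w₁·d₁ + w₂·d₂ = c` and Eve (via `σ`, seeing the history and
Adam's proposal) picks the successor, inheriting the proposed credit; at Adam's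
vertices Adam picks the successor and the credit is unchanged. -/
def BetPlay (σ : List (V × ℝ) → (Bool → ℝ) → Bool) (v₀ : V) (c₀ : ℝ)
    (π : ℕ → V × ℝ) : Prop :=
  π 0 = (v₀, c₀) ∧ ∀ n,
    (G.isEve (π n).1 = true →
      ∃ d : Bool → ℝ,
        G.w (π n).1 true * d true + G.w (π n).1 false * d false = (π n).2 ∧
        π (n + 1) = (G.succ (π n).1 (σ (List.ofFn fun i : Fin (n + 1) => π i) d),
                     d (σ (List.ofFn fun i : Fin (n + 1) => π i) d))) ∧
    (G.isEve (π n).1 = false → ∃ i, π (n + 1) = (G.succ (π n).1 i, (π n).2))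

end IBG

/-!
Eve's attractor to `T` ranks every vertex: from a vertex of positive rank, Eve has an edge and
Adam has only edges to smaller rank. Writing `e = c - c₀` for the excess credit, the potential
`e · (1 + (W/9)^rank)` is multiplied by a fixed factor `s > 1` at every step of the following
strategy: Eve follows her rank-decreasing edge when the credit Adam assigns to it already achieves
this growth, and otherwise takes the other edge, to which the constraint `w₁d₁ + w₂d₂ = c` forces
Adam to assign a substantially larger credit. The excess never becomes negative, and it becomes
positive after finitely many steps because the rank cannot decrease forever; from then on the
potential, which is at most `2e`, grows geometrically, so the credit eventually exceeds `B`.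
-/

def histSeq {α : Type*} (next : List α → α) (a : α) : ℕ → α
  | 0 => a
  | n + 1 => next (List.ofFn fun i : Fin (n + 1) => histSeq next a i)

lemma histSeq_zero {α : Type*} (next : List α → α) (a : α) : histSeq next a 0 = a := by
  rw [histSeq]

lemma histSeq_succ {α : Type*} (next : List α → α) (a : α) (n : ℕ) :
    histSeq next a (n + 1) = next (List.ofFn fun i : Fin (n + 1) => histSeq next a i) := by
  rw [histSeq]

lemma List.getLast?_ofFn_succ {α : Type*} (f : ℕ → α) (n : ℕ) :
    (List.ofFn fun i : Fin (n + 1) => f i).getLast? = some (f n) := by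
  rw [List.getLast?_eq_some_getLast (by simp), List.getLast_ofFn]
  simp

section LevelWeight

noncomputable def levelWeight (W : ℝ) (k : ℕ) : ℝ := 1 + ((9 / W) ^ k)⁻¹

noncomputable def growthFactor (W : ℝ) (N : ℕ) : ℝ := 1 + ((9 / W) ^ N)⁻¹

variable {W : ℝ}

lemma one_le_nine_div (hW : 0 < W) (hW1 : W ≤ 1) : 1 ≤ 9 / W := by
  rw [le_div_iff₀ hW]
  linarith

lemma one_lt_growthFactor (hW : 0 < W) (N : ℕ) : 1 < growthFactor W N := by
  unfold growthFactor
  have : 0 < 9 / W := by positivity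
  linarith [inv_pos.2 (pow_pos this N)]

lemma one_le_levelWeight (hW : 0 < W) (k : ℕ) : 1 ≤ levelWeight W k := by
  unfold levelWeight
  have : 0 < 9 / W := by positivity
  linarith [inv_pos.2 (pow_pos this k)]

lemma levelWeight_le_two (hW : 0 < W) (hW1 : W ≤ 1) (k : ℕ) : levelWeight W k ≤ 2 := by
  unfold levelWeight
  linarith [inv_le_one_of_one_le₀ (one_le_pow₀ (n := k) (one_le_nine_div hW hW1))]

lemma levelWeight_antitone (hW : 0 < W) (hW1 : W ≤ 1) : Antitone (levelWeight W) := by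
  intro j k hjk
  have ha := one_le_nine_div hW hW1
  unfold levelWeight
  linarith [inv_anti₀ (pow_pos (one_pos.trans_le ha) j) (pow_le_pow_right₀ ha hjk)]

/-- With `Q = levelWeight W j` and `y = growthFactor W N * levelWeight W (j + 1)` this reads
`y ≤ Q (1 + W) / (Q + W)`, exactly what the potential needs when Eve leaves the rank-decreasing
edge of a vertex of rank `j + 1`. -/
lemma growthFactor_mul_levelWeight_succ_mul_le (hW : 0 < W) (hW1 : W ≤ 1) {j N : ℕ}
    (hj : j + 1 ≤ N) :
    growthFactor W N * levelWeight W (j + 1) * (levelWeight W j + W) ≤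
      levelWeight W j * (1 + W) := by
  unfold growthFactor levelWeight
  have ha := one_le_nine_div hW hW1
  have ha0 : 0 < 9 / W := by positivity
  set X := ((9 / W) ^ (j + 1))⁻¹
  set Y := ((9 / W) ^ j)⁻¹
  have hX0 : 0 ≤ X := by positivity
  have hWY : W * Y = 9 * X := by
    simp only [X, Y, pow_succ, mul_inv]
    field_simp
  have hXY : X ≤ Y := inv_anti₀ (pow_pos ha0 j) (pow_le_pow_right₀ ha (Nat.le_succ j))
  have hY1 : Y ≤ 1 := inv_le_one_of_one_le₀ (one_le_pow₀ ha)
  have hσ0 : 0 ≤ ((9 / W) ^ N)⁻¹ := by positivity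
  have hσX : ((9 / W) ^ N)⁻¹ ≤ X := inv_anti₀ (pow_pos ha0 _) (pow_le_pow_right₀ ha hj)
  -- `(1 + Y) * (1 + W)` exceeds `1 + Y + W` by `W * Y = 9 * X`, which absorbs the growth.
  nlinarith [mul_le_mul hσX hXY hX0 hX0, mul_nonneg hσ0 hX0]

lemma growthFactor_mul_levelWeight_succ_le (hW : 0 < W) (hW1 : W ≤ 1) {j N : ℕ}
    (hj : j + 1 ≤ N) : growthFactor W N * levelWeight W (j + 1) ≤ levelWeight W j := by
  have h := growthFactor_mul_levelWeight_succ_mul_le hW hW1 hj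
  have hQ := one_le_levelWeight hW j
  nlinarith

/-- `wg, eg` and `wo, eo` are the weight and proposed excess credit of the rank-decreasing and of
the other successor, and `hrej` says that Eve rejects the former. -/
lemma le_excess_of_reject {W wg wo e eg eo Q qg y : ℝ} (hW : 0 < W) (hwg : W ≤ wg)
    (hwo : 0 < wo) (hw : wg + wo = 1) (hbet : wg * eg + wo * eo = e) (he : 0 ≤ e)
    (hQ : 1 ≤ Q) (hQg : Q ≤ qg) (hy : y * (Q + W) ≤ Q * (1 + W)) (hy0 : 0 ≤ y)
    (hrej : eg * qg < y * e) :
    y * e ≤ eo ∧ (e = 0 → 0 < eo) := by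
  have hegQ : eg * Q ≤ y * e := by
    rcases le_or_gt 0 eg with heg | heg
    · nlinarith [mul_le_mul_of_nonneg_left hQg heg]
    · nlinarith
  have hyQ : y ≤ Q := by nlinarith
  have hege : eg ≤ e := by nlinarith
  have hgain : W * (e - eg) ≤ eo - e := by
    have hflow : wo * (eo - e) = wg * (e - eg) := by linear_combination hbet - e * hw
    have hgain' : W * (e - eg) ≤ wo * (eo - e) := by
      rw [hflow]
      exact mul_le_mul_of_nonneg_right hwg (sub_nonneg.2 hege)
    have : 0 ≤ eo - e := by nlinarith
    nlinarith
  refine ⟨?_, fun he0 => ?_⟩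
  · have : y * e * Q ≤ eo * Q := by nlinarith
    exact le_of_mul_le_mul_right this (by linarith)
  · subst he0
    have : eg < 0 := by nlinarith
    nlinarith

end LevelWeight

namespace IBG

variable {V : Type} (G : IBG V)

lemma W_le_one (v : V) : G.W ≤ 1 := by
  linarith [G.hWle v true, G.hWle v false, G.hsum v, G.hWpos]

lemma w_add_w_not (v : V) (g : Bool) : G.w v g + G.w v (!g) = 1 := by
  cases g
  exacts [(add_comm _ _).trans (G.hsum v), G.hsum v]

lemma w_mul_sub_add_w_not_mul_sub {v : V} {c : ℝ} {d : Bool → ℝ}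
    (hd : G.w v true * d true + G.w v false * d false = c) (c₀ : ℝ) (g : Bool) :
    G.w v g * (d g - c₀) + G.w v (!g) * (d (!g) - c₀) = c - c₀ := by
  cases g <;> simp only [Bool.not_true, Bool.not_false] <;> linear_combination hd - c₀ * G.hsum v

section Attractor

variable (T : Set V)

/-- Eve's controllable predecessor of `S`. -/
def cpre (S : Set V) : Set V :=
  {v | (G.isEve v = true → ∃ i, G.succ v i ∈ S) ∧ (G.isEve v = false → ∀ i, G.succ v i ∈ S)}

def attractor : ℕ → Set V
  | 0 => T
  | n + 1 => attractor n ∪ G.cpre (attractor n)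

lemma attractor_mono : Monotone (G.attractor T) :=
  monotone_nat_of_le_succ fun _ => subset_union_left

lemma cpre_iUnion_attractor_subset :
    G.cpre (⋃ n, G.attractor T n) ⊆ ⋃ n, G.attractor T n := by
  rintro v ⟨hEve, hAdam⟩
  simp only [mem_iUnion] at hEve hAdam ⊢
  cases hv : G.isEve v
  · choose m hm using hAdam hv
    refine ⟨max (m true) (m false) + 1, Or.inr ⟨fun h => by simp [hv] at h, fun _ => ?_⟩⟩
    rintro (_ | _)
    · exact G.attractor_mono T (le_max_right _ _) (hm false)
    · exact G.attractor_mono T (le_max_left _ _) (hm true)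
  · obtain ⟨i, n, hn⟩ := hEve hv
    exact ⟨n + 1, Or.inr ⟨fun _ => ⟨i, hn⟩, fun h => by simp [hv] at h⟩⟩

lemma succ_not_mem_iUnion_attractor {v : V} (hv : v ∉ ⋃ n, G.attractor T n) :
    (G.isEve v = true → ∀ i, G.succ v i ∉ ⋃ n, G.attractor T n) ∧
      (G.isEve v = false → ∃ i, G.succ v i ∉ ⋃ n, G.attractor T n) := by
  refine ⟨fun hE i hi => hv (G.cpre_iUnion_attractor_subset T ?_), fun hA => ?_⟩
  · exact ⟨fun _ => ⟨i, hi⟩, fun h => by simp [hE] at h⟩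
  · by_contra! h
    exact hv (G.cpre_iUnion_attractor_subset T ⟨fun h' => by simp [hA] at h', fun _ => h⟩)

/-- Otherwise Adam keeps the play outside the attractor forever, its complement being a trap. -/
lemma mem_iUnion_attractor_of_forall_play {σ : List V → Bool} {v : V}
    (h : ∀ ρ, G.GraphPlay σ v ρ → ∃ n, ρ n ∈ T) : v ∈ ⋃ n, G.attractor T n := by
  classical
  set A := ⋃ n, G.attractor T n
  by_contra hv
  let adam : V → Bool := fun u => if h : ∃ i, G.succ u i ∉ A then h.choose else true
  let next : List V → V := fun hist =>
    if G.isEve (hist.getLastD v) then G.succ (hist.getLastD v) (σ hist)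
    else G.succ (hist.getLastD v) (adam (hist.getLastD v))
  obtain ⟨ρ, hρ0, hρ⟩ : ∃ ρ : ℕ → V, ρ 0 = v ∧
      ∀ n, ρ (n + 1) = next (List.ofFn fun i : Fin (n + 1) => ρ i) :=
    ⟨histSeq next v, histSeq_zero next v, histSeq_succ next v⟩
  have hlast : ∀ n, (List.ofFn fun i : Fin (n + 1) => ρ i).getLastD v = ρ n := fun n => by
    rw [List.getLastD_eq_getLast?, List.getLast?_ofFn_succ]
    rfl
  have hstep : ∀ n, ρ (n + 1) = if G.isEve (ρ n) then G.succ (ρ n) (σ (List.ofFn fun i :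
      Fin (n + 1) => ρ i)) else G.succ (ρ n) (adam (ρ n)) := fun n => by
    rw [hρ]
    simp only [next, hlast]
  have hout : ∀ n, ρ n ∉ A := by
    intro n
    induction n with
    | zero => rwa [hρ0]
    | succ n ih =>
      have htrap := G.succ_not_mem_iUnion_attractor T ih
      rw [hstep]
      cases hE : G.isEve (ρ n)
      · simp only [Bool.false_eq_true, if_false, adam]
        rw [dif_pos (htrap.2 hE)]
        exact (htrap.2 hE).choose_spec
      · exact htrap.1 hE _
  have hplay : G.GraphPlay σ v ρ := by
    refine ⟨hρ0, fun n => ⟨fun hE => ?_, fun hE => ⟨adam (ρ n), ?_⟩⟩⟩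
    · rw [hstep, if_pos hE]
    · rw [hstep, hE, if_neg Bool.false_ne_true]
  obtain ⟨n, hn⟩ := h ρ hplay
  exact hout n (mem_iUnion.2 ⟨0, hn⟩)

def IsRanking (r : V → ℕ) : Prop :=
  ∀ v ∉ T, (G.isEve v = true → ∃ i, r (G.succ v i) < r v) ∧
    (G.isEve v = false → ∀ i, r (G.succ v i) < r v)

lemma exists_isRanking (h : ∀ v, v ∈ ⋃ n, G.attractor T n) : ∃ r, G.IsRanking T r := by
  classical
  have h' : ∀ v, ∃ n, v ∈ G.attractor T n := fun v => mem_iUnion.1 (h v)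
  refine ⟨fun v => Nat.find (h' v), fun v hvT => ?_⟩
  obtain ⟨k, hk⟩ : ∃ k, Nat.find (h' v) = k + 1 :=
    Nat.exists_eq_succ_of_ne_zero fun h0 =>
      hvT (by simpa [h0, attractor] using Nat.find_spec (h' v))
  have hmem := Nat.find_spec (h' v)
  rw [hk] at hmem
  have hcpre : v ∈ G.cpre (G.attractor T k) :=
    hmem.resolve_left (Nat.find_min (h' v) (by omega))
  simp only [hk]
  exact ⟨fun hE => (hcpre.1 hE).imp fun i hi => Nat.lt_succ_of_le (Nat.find_min' _ hi),
    fun hA i => Nat.lt_succ_of_le (Nat.find_min' _ (hcpre.2 hA i))⟩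

end Attractor

section Betting

variable (r : V → ℕ) (N : ℕ) (c₀ : ℝ)

noncomputable def potential (p : V × ℝ) : ℝ := (p.2 - c₀) * levelWeight G.W (r p.1)

def bestSucc (v : V) : Bool := decide (r (G.succ v true) ≤ r (G.succ v false))

lemma rank_bestSucc_le (v : V) (i : Bool) : r (G.succ v (G.bestSucc r v)) ≤ r (G.succ v i) := by
  unfold bestSucc
  by_cases h : r (G.succ v true) ≤ r (G.succ v false)
  · cases i <;> simp [h]
  · cases i <;> simp [h]
    omega

noncomputable def eveChoice (p : V × ℝ) (d : Bool → ℝ) : Bool :=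
  if growthFactor G.W N * G.potential r c₀ p ≤
      G.potential r c₀ (G.succ p.1 (G.bestSucc r p.1), d (G.bestSucc r p.1))
  then G.bestSucc r p.1 else !G.bestSucc r p.1

noncomputable def betStrategy (hist : List (V × ℝ)) (d : Bool → ℝ) : Bool :=
  hist.getLast?.elim true fun p => G.eveChoice r N c₀ p d

def Progress (p p' : V × ℝ) : Prop :=
  c₀ ≤ p'.2 ∧ growthFactor G.W N * G.potential r c₀ p ≤ G.potential r c₀ p' ∧
    (p.2 = c₀ → c₀ < p'.2 ∨ r p'.1 < r p.1)

variable {T : Set V} {r N c₀}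

lemma progress_adam (hr : G.IsRanking T r) (hN : ∀ v, r v ≤ N) {v : V} {c : ℝ} (hv : v ∉ T)
    (hA : G.isEve v = false) (hc : c₀ ≤ c) (i : Bool) :
    G.Progress r N c₀ (v, c) (G.succ v i, c) := by
  have hW1 := G.W_le_one v
  have hlt := (hr v hv).2 hA i
  obtain ⟨j, hj⟩ : ∃ j, r v = j + 1 := ⟨r v - 1, by omega⟩
  refine ⟨hc, ?_, fun _ => Or.inr hlt⟩
  simp only [potential, hj]
  calc growthFactor G.W N * ((c - c₀) * levelWeight G.W (j + 1))
      = (c - c₀) * (growthFactor G.W N * levelWeight G.W (j + 1)) := by ring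
    _ ≤ (c - c₀) * levelWeight G.W j :=
      mul_le_mul_of_nonneg_left (growthFactor_mul_levelWeight_succ_le G.hWpos hW1 (hj ▸ hN v))
        (sub_nonneg.2 hc)
    _ ≤ (c - c₀) * levelWeight G.W (r (G.succ v i)) :=
      mul_le_mul_of_nonneg_left (levelWeight_antitone G.hWpos hW1 (by omega)) (sub_nonneg.2 hc)

lemma progress_eve (hr : G.IsRanking T r) (hN : ∀ v, r v ≤ N) {v : V} {c : ℝ} (hv : v ∉ T)
    (hE : G.isEve v = true) (hc : c₀ ≤ c) {d : Bool → ℝ}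
    (hd : G.w v true * d true + G.w v false * d false = c) :
    G.Progress r N c₀ (v, c)
      (G.succ v (G.eveChoice r N c₀ (v, c) d), d (G.eveChoice r N c₀ (v, c) d)) := by
  have hW := G.hWpos
  have hW1 := G.W_le_one v
  unfold eveChoice
  dsimp only
  set g := G.bestSucc r v
  have hg : r (G.succ v g) < r v := by
    obtain ⟨i, hi⟩ := (hr v hv).1 hE
    exact (G.rank_bestSucc_le r v i).trans_lt hi
  obtain ⟨j, hj⟩ : ∃ j, r v = j + 1 := ⟨r v - 1, by omega⟩
  have hkey := growthFactor_mul_levelWeight_succ_mul_le hW hW1 (hj ▸ hN v)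
  have hs := one_lt_growthFactor hW N
  have hy0 : 0 ≤ growthFactor G.W N * levelWeight G.W (j + 1) :=
    mul_nonneg (by linarith) (by linarith [one_le_levelWeight hW (j + 1)])
  split_ifs with hacc
  · refine ⟨?_, hacc, fun _ => Or.inr hg⟩
    have hΦ : 0 ≤ growthFactor G.W N * G.potential r c₀ (v, c) :=
      mul_nonneg (by linarith)
        (mul_nonneg (sub_nonneg.2 hc) (zero_le_one.trans (one_le_levelWeight hW _)))
    exact sub_nonneg.1 (nonneg_of_mul_nonneg_left (hΦ.trans hacc)
      (one_pos.trans_le (one_le_levelWeight hW _)))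
  · simp only [potential, hj] at hacc
    obtain ⟨hgain, hzero⟩ := le_excess_of_reject hW (G.hWle v g) (hW.trans_le (G.hWle v (!g)))
      (G.w_add_w_not v g) (G.w_mul_sub_add_w_not_mul_sub hd c₀ g) (sub_nonneg.2 hc)
      (one_le_levelWeight hW j)
      (levelWeight_antitone hW hW1 (by omega : r (G.succ v g) ≤ j)) hkey hy0
      (by linarith [not_le.1 hacc])
    have hnonneg : 0 ≤ d (!g) - c₀ := le_trans (mul_nonneg hy0 (sub_nonneg.2 hc)) hgain
    refine ⟨by linarith, ?_, fun hc₀ => Or.inl (by linarith [hzero (sub_eq_zero.2 hc₀)])⟩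
    simp only [potential, hj]
    calc growthFactor G.W N * ((c - c₀) * levelWeight G.W (j + 1))
        = growthFactor G.W N * levelWeight G.W (j + 1) * (c - c₀) := by ring
      _ ≤ d (!g) - c₀ := hgain
      _ ≤ (d (!g) - c₀) * levelWeight G.W (r (G.succ v (!g))) :=
        le_mul_of_one_le_right hnonneg (one_le_levelWeight hW _)

lemma betStrategy_ofFn (π : ℕ → V × ℝ) (n : ℕ) (d : Bool → ℝ) :
    G.betStrategy r N c₀ (List.ofFn fun i : Fin (n + 1) => π i) d = G.eveChoice r N c₀ (π n) d := by
  rw [betStrategy, List.getLast?_ofFn_succ]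
  rfl

lemma progress_of_betPlay (hr : G.IsRanking T r) (hN : ∀ v, r v ≤ N) {v₀ : V} {π : ℕ → V × ℝ}
    (hπ : G.BetPlay (G.betStrategy r N c₀) v₀ c₀ π) (n : ℕ) (hT : (π n).1 ∉ T)
    (hc : c₀ ≤ (π n).2) : G.Progress r N c₀ (π n) (π (n + 1)) := by
  cases hE : G.isEve (π n).1
  · obtain ⟨i, hi⟩ := (hπ.2 n).2 hE
    rw [hi]
    exact G.progress_adam hr hN hT hE hc i
  · obtain ⟨d, hd, hnext⟩ := (hπ.2 n).1 hE
    rw [hnext, betStrategy_ofFn]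
    exact G.progress_eve hr hN hT hE hc hd

lemma exists_le_credit_of_progress {π : ℕ → V × ℝ} (h0 : c₀ ≤ (π 0).2)
    (h : ∀ n, c₀ ≤ (π n).2 → G.Progress r N c₀ (π n) (π (n + 1))) (B : ℝ) :
    ∃ n, B ≤ (π n).2 := by
  have hW := G.hWpos
  have hW1 := G.W_le_one (π 0).1
  have hinv : ∀ n, c₀ ≤ (π n).2 := fun n => Nat.rec h0 (fun n ih => (h n ih).1) n
  obtain ⟨m, hm⟩ : ∃ m, c₀ < (π m).2 := by
    by_contra! hc
    obtain ⟨n, hn⟩ := WellFounded.not_rel_apply_succ (r := (· < ·)) fun n => r (π n).1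
    exact hn (((h n (hinv n)).2.2 (le_antisymm (hc n) (hinv n))).resolve_left
      (not_lt.2 (hc (n + 1))))
  have hpos : 0 < G.potential r c₀ (π m) :=
    mul_pos (sub_pos.2 hm) (one_pos.trans_le (one_le_levelWeight hW _))
  have hpow : ∀ j, growthFactor G.W N ^ j * G.potential r c₀ (π m) ≤
      G.potential r c₀ (π (m + j)) := by
    intro j
    induction j with
    | zero => simp
    | succ j ih =>
      calc growthFactor G.W N ^ (j + 1) * G.potential r c₀ (π m)
          = growthFactor G.W N * (growthFactor G.W N ^ j * G.potential r c₀ (π m)) := by ring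
        _ ≤ growthFactor G.W N * G.potential r c₀ (π (m + j)) :=
          mul_le_mul_of_nonneg_left ih (one_pos.trans (one_lt_growthFactor hW N)).le
        _ ≤ G.potential r c₀ (π (m + j + 1)) := (h _ (hinv _)).2.1
  obtain ⟨j, hj⟩ := pow_unbounded_of_one_lt (2 * (B - c₀) / G.potential r c₀ (π m))
    (one_lt_growthFactor hW N)
  rw [div_lt_iff₀ hpos] at hj
  have hbound : G.potential r c₀ (π (m + j)) ≤ ((π (m + j)).2 - c₀) * 2 :=
    mul_le_mul_of_nonneg_left (levelWeight_le_two hW hW1 _) (sub_nonneg.2 (hinv _))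
  exact ⟨m + j, by linarith [hpow j]⟩

end Betting

end IBG

/-- If from every vertex Eve can ensure visiting the target set `T`, then for every
bound `B` Eve has a strategy in the inverse betting game ensuring that the play
reaches a configuration in `(T × [c₀, ∞)) ∪ (V × [B, ∞))`. -/
theorem stmt_18 {V : Type} [Fintype V] (G : IBG V) (T : Set V)
    (hreach : ∀ v : V, ∃ σg : List V → Bool,
      ∀ ρ : ℕ → V, G.GraphPlay σg v ρ → ∃ n, ρ n ∈ T)
    (v₀ : V) (c₀ : ℝ) (B : ℝ) :
    ∃ σ : List (V × ℝ) → (Bool → ℝ) → Bool,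
      ∀ π : ℕ → V × ℝ, G.BetPlay σ v₀ c₀ π →
        ∃ n, ((π n).1 ∈ T ∧ c₀ ≤ (π n).2) ∨ B ≤ (π n).2 := by
  obtain ⟨r, hr⟩ := G.exists_isRanking T fun v =>
    (hreach v).elim fun _ h => G.mem_iUnion_attractor_of_forall_play T h
  have hN : ∀ v, r v ≤ Finset.univ.sup r := fun v => Finset.le_sup (Finset.mem_univ v)
  refine ⟨G.betStrategy r (Finset.univ.sup r) c₀, fun π hπ => ?_⟩
  by_contra! hlose
  have hprog (n : ℕ) (hc : c₀ ≤ (π n).2) := G.progress_of_betPlay hr hN hπ n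
    (fun hT => ((hlose n).1 hT).not_ge hc) hc
  obtain ⟨n, hn⟩ := G.exists_le_credit_of_progress (by rw [hπ.1]) hprog B
  exact (hlose n).2.not_ge hn
end
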